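/- Let f : U → ℝᵐ be a proper rectifying smooth immersion of a connected open set U ⊆ ℝⁿ. Then for every u ∈ U one has m > n + dim(Im h_u), where Im h_u := span_ℝ { h_u(X,Y) : X, Y ∈ ℝⁿ } is the first normal space at u and dim denotes the finite-dimensional rank (finrank). (Lemma 3.3.) -/

import Mathlib

open scoped RealInnerProductSpace

/-- Orthogonal projection of `v` onto the tangent space `T_u = range (fderiv ℝ f u)`. -/
noncomputable def tangentProj {n m : ℕ}
    (f : EuclideanSpace ℝ (Fin n) → EuclideanSpace ℝ (Fin m))
    (u : EuclideanSpace ℝ (Fin n)) (v : EuclideanSpace ℝ (Fin m)) :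
    EuclideanSpace ℝ (Fin m) :=
  (Submodule.orthogonalProjectionOnto (LinearMap.range ((fderiv ℝ f u : EuclideanSpace ℝ (Fin n) →L[ℝ] EuclideanSpace ℝ (Fin m)) :
      EuclideanSpace ℝ (Fin n) →ₗ[ℝ] EuclideanSpace ℝ (Fin m))) v : EuclideanSpace ℝ (Fin m))

/-- Tangential component `x^T(u)` of the position vector. -/
noncomputable def posT {n m : ℕ}
    (f : EuclideanSpace ℝ (Fin n) → EuclideanSpace ℝ (Fin m))
    (u : EuclideanSpace ℝ (Fin n)) : EuclideanSpace ℝ (Fin m) :=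
  tangentProj f u (f u)

/-- Normal component `x^N(u)` of the position vector. -/
noncomputable def posN {n m : ℕ}
    (f : EuclideanSpace ℝ (Fin n) → EuclideanSpace ℝ (Fin m))
    (u : EuclideanSpace ℝ (Fin n)) : EuclideanSpace ℝ (Fin m) :=
  f u - tangentProj f u (f u)

/-- Second fundamental form `h_u(X,Y)`: the normal component of the second derivative. -/
noncomputable def sff {n m : ℕ}
    (f : EuclideanSpace ℝ (Fin n) → EuclideanSpace ℝ (Fin m))
    (u X Y : EuclideanSpace ℝ (Fin n)) : EuclideanSpace ℝ (Fin m) :=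
  fderiv ℝ (fderiv ℝ f) u X Y - tangentProj f u (fderiv ℝ (fderiv ℝ f) u X Y)

/-- **Lemma 3.3.** If `f : U → ℝᵐ` is a proper rectifying smooth immersion of a connected
open set `U ⊆ ℝⁿ`, then `m > n + dim (Im h_u)` at every point `u ∈ U`, where
`Im h_u = span { h_u(X,Y) }` is the first normal space. -/
theorem stmt_3 {n m : ℕ} (hn : 0 < n) (hnm : n < m)
    (U : Set (EuclideanSpace ℝ (Fin n))) (hU : IsOpen U) (hUconn : IsConnected U)
    (f : EuclideanSpace ℝ (Fin n) → EuclideanSpace ℝ (Fin m))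
    (hf : ContDiffOn ℝ (⊤ : ℕ∞) f U)
    (himm : ∀ u ∈ U, Function.Injective (fderiv ℝ f u))
    (hrect : ∀ u ∈ U, ∀ X Y : EuclideanSpace ℝ (Fin n), ⟪f u, sff f u X Y⟫ = 0)
    (hT : ∀ u ∈ U, posT f u ≠ 0) (hN : ∀ u ∈ U, posN f u ≠ 0) :
    ∀ u ∈ U,
      m > n + Module.finrank ℝ
        (Submodule.span ℝ {w : EuclideanSpace ℝ (Fin m) |
          ∃ X Y : EuclideanSpace ℝ (Fin n), w = sff f u X Y}) := by
  intro u hu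
  set K : Submodule ℝ (EuclideanSpace ℝ (Fin m)) := LinearMap.range ((fderiv ℝ f u : EuclideanSpace ℝ (Fin n) →L[ℝ] EuclideanSpace ℝ (Fin m)) :
      EuclideanSpace ℝ (Fin n) →ₗ[ℝ] EuclideanSpace ℝ (Fin m)) with hK
  have hxN : posN f u ∈ Kᗮ := by
    exact
      Submodule.sub_starProjection_mem_orthogonal (K := K) (f u)
  have hsffmem : ∀ X Y, sff f u X Y ∈ Kᗮ := fun X Y => by
    exact
      Submodule.sub_starProjection_mem_orthogonal (K := K) (fderiv ℝ (fderiv ℝ f) u X Y)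
  set K' : Submodule ℝ (EuclideanSpace ℝ (Fin m)) := K ⊔ Submodule.span ℝ {posN f u} with hK'
  -- the span of the sff values lies in K'ᗮ
  have hle : Submodule.span ℝ {w : EuclideanSpace ℝ (Fin m) |
      ∃ X Y : EuclideanSpace ℝ (Fin n), w = sff f u X Y} ≤ K'ᗮ := by
    rw [Submodule.span_le]
    rintro w ⟨X, Y, rfl⟩
    simp only [SetLike.mem_coe, Submodule.mem_orthogonal]
    intro v hv
    rcases Submodule.mem_sup.mp hv with ⟨a, ha, b, hb, rfl⟩
    rcases Submodule.mem_span_singleton.mp hb with ⟨c, rfl⟩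
    have h1 : ⟪a, sff f u X Y⟫ = 0 := (Submodule.mem_orthogonal K _).mp (hsffmem X Y) a ha
    have h2 : ⟪posN f u, sff f u X Y⟫ = 0 := by
      have hproj : tangentProj f u (f u) ∈ K :=
        (Submodule.orthogonalProjectionOnto K (f u)).2
      have h3 : ⟪tangentProj f u (f u), sff f u X Y⟫ = 0 :=
        (Submodule.mem_orthogonal K _).mp (hsffmem X Y) _ hproj
      have := hrect u hu X Y
      simp only [posN, inner_sub_left, this, h3]
      ring
    rw [inner_add_left, h1, inner_smul_left, h2]
    simp
  have hKrank : Module.finrank ℝ K = n := by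
    have h := LinearMap.finrank_range_of_inj (f := (fderiv ℝ f u).toLinearMap) (himm u hu)
    simpa [hK] using h
  have hspanN : Submodule.span ℝ {posN f u} ≤ Kᗮ := by
    rw [Submodule.span_le, Set.singleton_subset_iff]; exact hxN
  have hinf : K ⊓ Submodule.span ℝ {posN f u} = ⊥ :=
    (K.orthogonal_disjoint.mono_right hspanN).eq_bot
  have hK'rank : Module.finrank ℝ K' = n + 1 := by
    have := Submodule.finrank_sup_add_finrank_inf_eq K (Submodule.span ℝ {posN f u})
    rw [hinf, hKrank, finrank_span_singleton (hN u hu)] at this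
    simpa [hK'] using this
  have htotal : Module.finrank ℝ K' + Module.finrank ℝ K'ᗮ = m := by
    have := Submodule.finrank_add_finrank_orthogonal (K := K')
    simpa using this
  have hrank_le := Submodule.finrank_mono hle
  omega
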